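/- arXiv:2603.04223 — 2 statements merged into one kernel-verified Lean document; each statement's English description precedes it below -/
import Mathlib

section
/- Let X and Y be random vectors in ℝ^p and ℝ^q with finite first moments, let η ∼ N(0, I_d) be independent of X, let E: ℝ^q → ℝ^m and H: ℝ^p × ℝ^d → ℝ^m be measurable, and let D: ℝ^m → ℝ^q be K-Lipschitz. If E‖Y − D(E(Y))‖₂ = 0 and W₁(P_{X, H(X,η)}, P_{X, E(Y)}) = 0, then (X, D(H(X,η))) has the same joint distribution as (X, Y), and for P_X-almost every x the law of D(H(x, η)) equals the conditional distribution of Y given X = x. -/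
open MeasureTheory ProbabilityTheory

/-- The 1-Wasserstein "distance" between two measures on `E`, with respect to a cost
function `c`: the infimum over all couplings of the integral of the cost. -/
noncomputable def W1 {E : Type*} [MeasurableSpace E] (c : E → E → ℝ) (μ ν : Measure E) : ℝ :=
  sInf ((fun γ : Measure (E × E) => ∫ z, c z.1 z.2 ∂γ) ''
    {γ | Measure.map Prod.fst γ = μ ∧ Measure.map Prod.snd γ = ν})

/-- The Euclidean (ℓ²) distance on a product of (pseudo)metric spaces. -/
noncomputable def pairDist {E F : Type*} [PseudoMetricSpace E] [PseudoMetricSpace F]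
    (a b : E × F) : ℝ :=
  Real.sqrt (dist a.1 b.1 ^ 2 + dist a.2 b.2 ^ 2)

/-- The standard Gaussian measure `N(0, I_d)` on `ℝ^d`. -/
noncomputable def stdGaussian (d : ℕ) : Measure (EuclideanSpace ℝ (Fin d)) :=
  Measure.map (MeasurableEquiv.toLp 2 (Fin d → ℝ))
    (Measure.pi fun _ : Fin d => gaussianReal 0 1)

/-!
A coupling of `μ` and `ν` whose cost dominates the distance moves the integral of an
`L`-Lipschitz bounded function by at most `L` times its expected cost, and bounded Lipschitz
functions separate probability measures; with finite first moments every coupling has finite cost,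
so `W₁ = 0` forces `P_{X,H(X,η)} = P_{X,E(Y)}`. Pushing forward by `id × D` and using `Y = D(E(Y))`
a.s. gives the joint law. Independence of `X` and `η ∼ N(0, I_d)` writes the law of
`(X, D(H(X,η)))` as `P_X ⊗ (x ↦ law of D(H(x,η)))`, and a disintegration of `P_{X,Y}` is unique
`P_X`-a.e.
-/

open scoped NNReal BoundedContinuousFunction

section PairDist

variable {E F : Type*} [PseudoMetricSpace E] [PseudoMetricSpace F]

lemma dist_le_pairDist (a b : E × F) : dist a b ≤ pairDist a b := by
  rw [Prod.dist_eq, pairDist]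
  exact max_le ((Real.le_sqrt dist_nonneg (by positivity)).mpr (by nlinarith))
    ((Real.le_sqrt dist_nonneg (by positivity)).mpr (by nlinarith))

lemma pairDist_le_two_mul_dist (a b : E × F) : pairDist a b ≤ 2 * dist a b := by
  rw [Prod.dist_eq, pairDist, Real.sqrt_le_left (by positivity)]
  have h₁ := le_max_left (dist a.1 b.1) (dist a.2 b.2)
  have h₂ := le_max_right (dist a.1 b.1) (dist a.2 b.2)
  nlinarith [dist_nonneg (x := a.1) (y := b.1), dist_nonneg (x := a.2) (y := b.2)]

lemma measurable_pairDist [MeasurableSpace E] [MeasurableSpace F] [BorelSpace E] [BorelSpace F]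
    [SecondCountableTopology E] [SecondCountableTopology F] :
    Measurable fun z : (E × F) × (E × F) => pairDist z.1 z.2 := by
  unfold pairDist
  fun_prop

end PairDist

instance isProbabilityMeasure_stdGaussian (d : ℕ) : IsProbabilityMeasure (stdGaussian d) :=
  Measure.isProbabilityMeasure_map (MeasurableEquiv.measurable _).aemeasurable

section Coupling

variable {α : Type*} [PseudoMetricSpace α] [MeasurableSpace α] [OpensMeasurableSpace α]
  {μ ν : Measure α} {γ : Measure (α × α)}

lemma abs_integral_sub_integral_le_of_coupling [IsFiniteMeasure γ]
    (h₁ : γ.map Prod.fst = μ) (h₂ : γ.map Prod.snd = ν) {c : α → α → ℝ}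
    (hc : ∀ a b, dist a b ≤ c a b) (hcγ : Integrable (fun z => c z.1 z.2) γ)
    (f : α →ᵇ ℝ) {L : ℝ≥0} (hfL : LipschitzWith L f) :
    |∫ x, f x ∂μ - ∫ x, f x ∂ν| ≤ L * ∫ z, c z.1 z.2 ∂γ := by
  have hf : ∀ π : α × α → α, Measurable π → Integrable (fun z => f (π z)) γ := fun π hπ =>
    .mono' (integrable_const ‖f‖) (f.continuous.measurable.comp hπ).aestronglyMeasurable
      (.of_forall fun z => f.norm_coe_le_norm (π z))
  rw [← h₁, ← h₂, integral_map measurable_fst.aemeasurable f.continuous.aestronglyMeasurable,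
    integral_map measurable_snd.aemeasurable f.continuous.aestronglyMeasurable,
    ← integral_sub (hf _ measurable_fst) (hf _ measurable_snd), ← integral_const_mul]
  refine (abs_integral_le_integral_abs).trans (integral_mono_of_nonneg
    (.of_forall fun _ => abs_nonneg _) (hcγ.const_mul _) (.of_forall fun z => ?_))
  calc |f z.1 - f z.2| ≤ L * dist z.1 z.2 := by simpa [Real.dist_eq] using hfL.dist_le_mul z.1 z.2
    _ ≤ L * c z.1 z.2 := by gcongr; exact hc _ _

end Coupling

section Wasserstein

variable {α : Type*} [PseudoMetricSpace α] [MeasurableSpace α]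

theorem MeasureTheory.Measure.ext_of_forall_lipschitz_integral_eq [BorelSpace α]
    {μ ν : Measure α} [IsProbabilityMeasure μ] [IsProbabilityMeasure ν]
    (h : ∀ (f : α →ᵇ ℝ) (L : ℝ≥0), LipschitzWith L f → ∫ x, f x ∂μ = ∫ x, f x ∂ν) :
    μ = ν := by
  -- the constant sequence `ν` converges weakly to `μ`, and the weak topology is Hausdorff
  let μ' : ProbabilityMeasure α := ⟨μ, ‹_›⟩
  let ν' : ProbabilityMeasure α := ⟨ν, ‹_›⟩
  have hconst : Filter.Tendsto (fun _ : ℕ => ν') Filter.atTop (nhds μ') := by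
    rw [tendsto_iff_forall_lipschitz_integral_tendsto]
    rintro f ⟨C, hC⟩ ⟨L, hL⟩
    exact tendsto_const_nhds.congr fun _ => h ⟨⟨f, hL.continuous⟩, ⟨C, hC⟩⟩ L hL
  exact congrArg Subtype.val (tendsto_const_nhds_iff.mp hconst).symm

variable [OpensMeasurableSpace α] {μ ν : Measure α} [IsProbabilityMeasure μ]
  [IsProbabilityMeasure ν] {c : α → α → ℝ}

lemma integral_eq_of_W1_eq_zero (hc : ∀ a b, dist a b ≤ c a b)
    (hcint : ∀ γ : Measure (α × α), γ.map Prod.fst = μ → γ.map Prod.snd = ν →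
      Integrable (fun z => c z.1 z.2) γ)
    (h : W1 c μ ν = 0) (f : α →ᵇ ℝ) {L : ℝ≥0} (hf : LipschitzWith L f) :
    ∫ x, f x ∂μ = ∫ x, f x ∂ν := by
  -- `hcint` excludes couplings whose cost integral is the junk value `0`
  have hbound : ∀ r ∈ (fun γ : Measure (α × α) => ∫ z, c z.1 z.2 ∂γ) ''
      {γ | γ.map Prod.fst = μ ∧ γ.map Prod.snd = ν},
      |∫ x, f x ∂μ - ∫ x, f x ∂ν| / (L + 1) ≤ r := by
    rintro _ ⟨γ, ⟨h₁, h₂⟩, rfl⟩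
    have : IsProbabilityMeasure γ := by
      rw [← Measure.isProbabilityMeasure_map_iff measurable_fst.aemeasurable, h₁]; infer_instance
    have hle := abs_integral_sub_integral_le_of_coupling h₁ h₂ hc (hcint γ h₁ h₂) f hf
    have hcost : 0 ≤ ∫ z, c z.1 z.2 ∂γ := integral_nonneg fun z => dist_nonneg.trans (hc _ _)
    rw [div_le_iff₀ (by positivity)]
    nlinarith
  have hW1 := le_csInf ((Set.nonempty_of_mem (show μ.prod ν ∈ {γ : Measure (α × α) |
    γ.map Prod.fst = μ ∧ γ.map Prod.snd = ν} by simp)).image _) hbound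
  rwa [← W1, h, div_le_iff₀ (by positivity), zero_mul, abs_nonpos_iff, sub_eq_zero] at hW1

end Wasserstein

section FirstMoment

variable {α : Type*} [SeminormedAddCommGroup α] [MeasurableSpace α] [BorelSpace α]
  {μ ν : Measure α} {c : α → α → ℝ} {C : ℝ}

lemma integrable_cost_of_coupling (hc_meas : Measurable fun z : α × α => c z.1 z.2)
    (hc : ∀ a b, dist a b ≤ c a b) (hc_le : ∀ a b, c a b ≤ C * dist a b)
    (hμ : Integrable (‖·‖) μ) (hν : Integrable (‖·‖) ν) {γ : Measure (α × α)}
    (h₁ : γ.map Prod.fst = μ) (h₂ : γ.map Prod.snd = ν) :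
    Integrable (fun z => c z.1 z.2) γ := by
  rw [← h₁, integrable_map_measure continuous_norm.aestronglyMeasurable
    measurable_fst.aemeasurable] at hμ
  rw [← h₂, integrable_map_measure continuous_norm.aestronglyMeasurable
    measurable_snd.aemeasurable] at hν
  refine .mono' ((hμ.add hν).const_mul |C|) hc_meas.aestronglyMeasurable (.of_forall fun z => ?_)
  rw [Real.norm_of_nonneg (dist_nonneg.trans (hc _ _))]
  calc c z.1 z.2 ≤ C * dist z.1 z.2 := hc_le _ _
    _ ≤ |C| * (‖z.1‖ + ‖z.2‖) :=
      mul_le_mul (le_abs_self C) (dist_le_norm_add_norm _ _) dist_nonneg (abs_nonneg C)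

theorem eq_of_W1_eq_zero [IsProbabilityMeasure μ] [IsProbabilityMeasure ν]
    (hc_meas : Measurable fun z : α × α => c z.1 z.2)
    (hc : ∀ a b, dist a b ≤ c a b) (hc_le : ∀ a b, c a b ≤ C * dist a b)
    (hμ : Integrable (‖·‖) μ) (hν : Integrable (‖·‖) ν) (h : W1 c μ ν = 0) : μ = ν :=
  Measure.ext_of_forall_lipschitz_integral_eq fun f _ hf => integral_eq_of_W1_eq_zero hc
    (fun _ h₁ h₂ => integrable_cost_of_coupling hc_meas hc hc_le hμ hν h₁ h₂) h f hf

end FirstMoment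

section Integrability

variable {Ω E F : Type*} [MeasurableSpace Ω] {μ : Measure Ω}
  [NormedAddCommGroup E] [NormedAddCommGroup F]

lemma LipschitzWith.integrable_comp [IsFiniteMeasure μ] {K : ℝ≥0} {g : E → F}
    (hg : LipschitzWith K g) {f : Ω → E} (hf : Integrable f μ) : Integrable (g ∘ f) μ := by
  refine .mono' ((integrable_const ‖g 0‖).add (hf.norm.const_mul K))
    (hg.continuous.comp_aestronglyMeasurable hf.1) (.of_forall fun ω => ?_)
  calc ‖g (f ω)‖ ≤ ‖g 0‖ + dist (g (f ω)) (g 0) := by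
        rw [dist_eq_norm]; exact norm_le_norm_add_norm_sub' _ _
    _ ≤ ‖g 0‖ + K * ‖f ω‖ := by grw [hg.dist_le_mul, dist_zero_right]

lemma ae_eq_of_integral_norm_sub_eq_zero {f g : Ω → E} (hf : Integrable f μ)
    (hg : Integrable g μ) (h : ∫ ω, ‖f ω - g ω‖ ∂μ = 0) : f =ᵐ[μ] g := by
  filter_upwards [(integral_eq_zero_iff_of_nonneg (fun _ => norm_nonneg _) (hf.sub hg).norm).mp h]
    with ω hω
  exact sub_eq_zero.mp (norm_eq_zero.mp hω)

lemma integrable_norm_map_prodMk [MeasurableSpace E] [MeasurableSpace F]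
    [OpensMeasurableSpace (E × F)] {f : Ω → E} {g : Ω → F} (hf : Measurable f) (hg : Measurable g)
    (hfi : Integrable (‖f ·‖) μ) (hgi : Integrable (‖g ·‖) μ) :
    Integrable (‖·‖) (μ.map fun ω => (f ω, g ω)) := by
  rw [integrable_map_measure continuous_norm.aestronglyMeasurable (hf.prodMk hg).aemeasurable]
  refine (hfi.add hgi).mono' (continuous_norm.measurable.comp (hf.prodMk hg)).aestronglyMeasurable
    (.of_forall fun ω => ?_)
  simp only [Function.comp_apply, Pi.add_apply, Prod.norm_def]
  rw [Real.norm_of_nonneg (by positivity)]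
  exact max_le_add_of_nonneg (norm_nonneg _) (norm_nonneg _)

end Integrability

section Randomization

variable {Ω α β γ : Type*} [MeasurableSpace Ω] [MeasurableSpace α] [MeasurableSpace β]
  [MeasurableSpace γ] {ν : Measure β} [IsFiniteMeasure ν] {G : α × β → γ}

lemma ProbabilityTheory.Kernel.map_id_prod_const_apply (hG : Measurable G) (x : α) :
    (Kernel.id ×ₖ Kernel.const α ν).map G x = ν.map fun b => G (x, b) := by
  rw [Kernel.map_apply _ hG, Kernel.prod_apply, Kernel.id_apply, Kernel.const_apply,
    Measure.dirac_prod, Measure.map_map hG measurable_prodMk_left]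
  rfl

variable {P : Measure Ω} [IsFiniteMeasure P] {X : Ω → α} {η : Ω → β}

lemma map_prodMk_eq_compProd_of_indepFun (hX : Measurable X) (hη : Measurable η)
    (hG : Measurable G) (hηlaw : P.map η = ν) (hindep : IndepFun X η P) :
    P.map (fun ω => (X ω, G (X ω, η ω))) = P.map X ⊗ₘ (Kernel.id ×ₖ Kernel.const α ν).map G := by
  have hG' : Measurable fun z : α × β => (z.1, G z) := measurable_fst.prodMk hG
  have hXη : P.map (fun ω => (X ω, η ω)) = (P.map X).prod ν := by
    rw [← hηlaw]
    exact (indepFun_iff_map_prod_eq_prod_map_map hX.aemeasurable hη.aemeasurable).mp hindep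
  rw [show (fun ω => (X ω, G (X ω, η ω))) = (fun z => (z.1, G z)) ∘ (fun ω => (X ω, η ω)) from rfl,
    ← Measure.map_map hG' (hX.prodMk hη), hXη]
  ext s hs
  rw [Measure.map_apply hG' hs, Measure.prod_apply (hG' hs), Measure.compProd_apply hs]
  refine lintegral_congr fun x => ?_
  rw [Kernel.map_id_prod_const_apply hG, Measure.map_apply (f := fun b => G (x, b))
    (hG.comp measurable_prodMk_left) (measurable_prodMk_left hs)]
  rfl

lemma ae_map_eq_condDistrib_of_indepFun [StandardBorelSpace γ] [Nonempty γ] {Y : Ω → γ}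
    (hX : Measurable X) (hY : Measurable Y) (hη : Measurable η) (hG : Measurable G)
    (hηlaw : P.map η = ν) (hindep : IndepFun X η P)
    (hlaw : P.map (fun ω => (X ω, G (X ω, η ω))) = P.map (fun ω => (X ω, Y ω))) :
    ∀ᵐ x ∂(P.map X), ν.map (fun b => G (x, b)) = condDistrib Y X P x := by
  have hκ := condDistrib_ae_eq_of_measure_eq_compProd_of_measurable hX hY
    (hlaw ▸ map_prodMk_eq_compProd_of_indepFun hX hη hG hηlaw hindep)
  filter_upwards [hκ] with x hx
  rw [hx, Kernel.map_id_prod_const_apply hG]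

end Randomization

/-- if `D` is `K`-Lipschitz, `E‖Y − D(E(Y))‖₂ = 0` and
`W₁(P_{X,H(X,η)}, P_{X,E(Y)}) = 0`, then `(X, D(H(X,η)))` has the same joint law as `(X,Y)`,
and for `P_X`-a.e. `x` the law of `D(H(x,η))` equals the conditional law of `Y` given `X = x`. -/
theorem stmt5 {p q m d : ℕ} {Ω : Type*} [MeasurableSpace Ω] (P : Measure Ω)
    [IsProbabilityMeasure P]
    (X : Ω → EuclideanSpace ℝ (Fin p)) (Y : Ω → EuclideanSpace ℝ (Fin q))
    (η : Ω → EuclideanSpace ℝ (Fin d))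
    (E : EuclideanSpace ℝ (Fin q) → EuclideanSpace ℝ (Fin m))
    (D : EuclideanSpace ℝ (Fin m) → EuclideanSpace ℝ (Fin q))
    (H : EuclideanSpace ℝ (Fin p) × EuclideanSpace ℝ (Fin d) → EuclideanSpace ℝ (Fin m))
    (K : ℝ)
    (hX : Measurable X) (hY : Measurable Y) (hη : Measurable η)
    (hE : Measurable E) (hH : Measurable H)
    (hD : ∀ u v, dist (D u) (D v) ≤ K * dist u v)
    (hηlaw : P.map η = stdGaussian d) (hindep : IndepFun X η P)
    (hXint : Integrable (fun ω => ‖X ω‖) P)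
    (hYint : Integrable (fun ω => ‖Y ω‖) P)
    (hEYint : Integrable (fun ω => ‖E (Y ω)‖) P)
    (hHint : Integrable (fun ω => ‖H (X ω, η ω)‖) P)
    (hrecon : ∫ ω, ‖Y ω - D (E (Y ω))‖ ∂P = 0)
    (hmatch : W1 pairDist (P.map (fun ω => (X ω, H (X ω, η ω))))
        (P.map (fun ω => (X ω, E (Y ω)))) = 0) :
    P.map (fun ω => (X ω, D (H (X ω, η ω)))) = P.map (fun ω => (X ω, Y ω)) ∧
    ∀ᵐ x ∂(P.map X),
      Measure.map (fun e => D (H (x, e))) (stdGaussian d) = condDistrib Y X P x := by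
  have hDlip := LipschitzWith.of_dist_le' hD
  have hDm : Measurable D := hDlip.continuous.measurable
  have hHXη : Measurable fun ω => H (X ω, η ω) := hH.comp (hX.prodMk hη)
  have hmH := hX.prodMk hHXη
  have hmE : Measurable fun ω => (X ω, E (Y ω)) := hX.prodMk (hE.comp hY)
  have := Measure.isProbabilityMeasure_map (μ := P) hmH.aemeasurable
  have := Measure.isProbabilityMeasure_map (μ := P) hmE.aemeasurable
  have hjoint : P.map (fun ω => (X ω, H (X ω, η ω))) = P.map (fun ω => (X ω, E (Y ω))) :=
    eq_of_W1_eq_zero measurable_pairDist dist_le_pairDist pairDist_le_two_mul_dist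
      (integrable_norm_map_prodMk hX hHXη hXint hHint)
      (integrable_norm_map_prodMk hX (hE.comp hY) hXint hEYint) hmatch
  have hDEY : (fun ω => D (E (Y ω))) =ᵐ[P] Y :=
    (ae_eq_of_integral_norm_sub_eq_zero ((integrable_norm_iff hY.aestronglyMeasurable).mp hYint)
      (hDlip.integrable_comp ((integrable_norm_iff (hE.comp hY).aestronglyMeasurable).mp hEYint))
      hrecon).symm
  have hlaw : P.map (fun ω => (X ω, D (H (X ω, η ω)))) = P.map (fun ω => (X ω, Y ω)) := calc
    _ = (P.map fun ω => (X ω, H (X ω, η ω))).map (Prod.map id D) :=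
      (Measure.map_map (measurable_id.prodMap hDm) hmH).symm
    _ = (P.map fun ω => (X ω, E (Y ω))).map (Prod.map id D) := by rw [hjoint]
    _ = P.map (fun ω => (X ω, D (E (Y ω)))) := Measure.map_map (measurable_id.prodMap hDm) hmE
    _ = P.map (fun ω => (X ω, Y ω)) :=
      Measure.map_congr (hDEY.mono fun ω h => congrArg (Prod.mk (X ω)) h)
  exact ⟨hlaw, ae_map_eq_condDistrib_of_indepFun hX hY hη (hDm.comp hH) hηlaw hindep hlaw⟩
end

section
/- Let μ and ν be probability measures on ℝ^d with finite second moments. Then W₁(μ, ν) ≤ √(2(∫‖x‖₂² dμ(x) + ∫‖x‖₂² dν(x))) · √(D_TV(μ, ν)). -/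
/-!
Split `μ = η + ρ₁` and `ν = η + ρ₂` with `ρ₁ ⟂ ρ₂` (Hahn decomposition); the two singular parts
have a common mass `δ`, and evaluating `μ - ν` on a set carrying `ρ₁` shows `δ ≤ D_TV(μ, ν)`.
The maximal coupling keeps the common part `η` on the diagonal and couples `ρ₁` with `ρ₂`
independently, so it charges the off-diagonal with mass at most `δ`. For any coupling `γ`, the
distance vanishes on the diagonal, so Cauchy–Schwarz bounds `∫ dist dγ` by
`(∫ dist² dγ)^{1/2} γ(off-diagonal)^{1/2}`, and `dist(x, y)² ≤ 2(‖x‖² + ‖y‖²)` bounds the first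
factor by the second moments of the marginals.
-/

open MeasureTheory ProbabilityTheory

/-- The total variation distance `sup_A |μ(A) − ν(A)|` over measurable sets `A`. -/
noncomputable def tvDist {α : Type*} [MeasurableSpace α] (μ ν : Measure α) : ℝ :=
  ⨆ A : {s : Set α // MeasurableSet s}, |(μ ↑A).toReal - (ν ↑A).toReal|

open Set

section CauchySchwarz

variable {α : Type*} [MeasurableSpace α] {μ : Measure α} [IsFiniteMeasure μ]

lemma integral_le_sqrt_integral_sq_mul_sqrt_measureReal {f : α → ℝ} {s : Set α}
    (hf_nonneg : 0 ≤ f) (hf : MemLp f 2 μ) (hfs : ∀ x ∉ s, f x = 0) :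
    ∫ x, f x ∂μ ≤ √(∫ x, f x ^ 2 ∂μ) * √(μ.real s) := by
  have hf' : MemLp f (ENNReal.ofReal 2) (μ.restrict s) := by
    simpa using hf.restrict s
  have holder := integral_mul_le_Lp_mul_Lq_of_nonneg Real.HolderConjugate.two_two
    (Filter.Eventually.of_forall hf_nonneg) (Filter.Eventually.of_forall fun _ => zero_le_one)
    hf' (memLp_const (1 : ℝ))
  simp only [mul_one, one_pow, integral_const, smul_eq_mul, Real.rpow_two,
    measureReal_restrict_apply_univ, ← Real.sqrt_eq_rpow] at holder
  calc ∫ x, f x ∂μ = ∫ x in s, f x ∂μ := (setIntegral_eq_integral_of_forall_compl_eq_zero hfs).symm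
    _ ≤ √(∫ x in s, f x ^ 2 ∂μ) * √(μ.real s) := holder
    _ ≤ √(∫ x, f x ^ 2 ∂μ) * √(μ.real s) := by
      gcongr ?_ * _
      exact Real.sqrt_le_sqrt <|
        setIntegral_le_integral ((memLp_two_iff_integrable_sq hf.1).1 hf)
          (Filter.Eventually.of_forall fun x => sq_nonneg (f x))

end CauchySchwarz

structure IsCoupling {α β : Type*} [MeasurableSpace α] [MeasurableSpace β]
    (γ : Measure (α × β)) (μ : Measure α) (ν : Measure β) : Prop where
  map_fst : γ.map Prod.fst = μ
  map_snd : γ.map Prod.snd = ν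

lemma W1_le_integral_of_isCoupling {E : Type*} [MeasurableSpace E] {c : E → E → ℝ}
    {μ ν : Measure E} {γ : Measure (E × E)} (hc : ∀ x y, 0 ≤ c x y) (hγ : IsCoupling γ μ ν) :
    W1 c μ ν ≤ ∫ z, c z.1 z.2 ∂γ :=
  csInf_le ⟨0, by rintro _ ⟨γ', -, rfl⟩; exact integral_nonneg fun z => hc z.1 z.2⟩
    ⟨γ, ⟨hγ.map_fst, hγ.map_snd⟩, rfl⟩

namespace IsCoupling

variable {α β : Type*} [MeasurableSpace α] [MeasurableSpace β]
  {γ : Measure (α × β)} {μ : Measure α} {ν : Measure β}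

lemma isFiniteMeasure [IsFiniteMeasure μ] (hγ : IsCoupling γ μ ν) : IsFiniteMeasure γ where
  measure_univ_lt_top := by
    rw [← preimage_univ (f := Prod.fst), ← Measure.map_apply measurable_fst MeasurableSet.univ,
      hγ.map_fst]
    exact measure_lt_top μ univ

lemma integrable_comp_fst (hγ : IsCoupling γ μ ν) {f : α → ℝ} (hf : Integrable f μ) :
    Integrable (fun z => f z.1) γ := by
  rw [← hγ.map_fst] at hf
  exact (integrable_map_measure hf.1 measurable_fst.aemeasurable).1 hf

lemma integrable_comp_snd (hγ : IsCoupling γ μ ν) {f : β → ℝ} (hf : Integrable f ν) :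
    Integrable (fun z => f z.2) γ := by
  rw [← hγ.map_snd] at hf
  exact (integrable_map_measure hf.1 measurable_snd.aemeasurable).1 hf

lemma integral_comp_fst (hγ : IsCoupling γ μ ν) {f : α → ℝ} (hf : Integrable f μ) :
    ∫ z, f z.1 ∂γ = ∫ x, f x ∂μ := by
  rw [← hγ.map_fst] at hf ⊢
  exact (integral_map measurable_fst.aemeasurable hf.1).symm

lemma integral_comp_snd (hγ : IsCoupling γ μ ν) {f : β → ℝ} (hf : Integrable f ν) :
    ∫ z, f z.2 ∂γ = ∫ x, f x ∂ν := by
  rw [← hγ.map_snd] at hf ⊢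
  exact (integral_map measurable_snd.aemeasurable hf.1).symm

end IsCoupling

lemma dist_sq_le_two_mul_norm_sq_add_norm_sq {E : Type*} [SeminormedAddCommGroup E] (x y : E) :
    dist x y ^ 2 ≤ 2 * (‖x‖ ^ 2 + ‖y‖ ^ 2) := by
  have h : dist x y ≤ ‖x‖ + ‖y‖ := (dist_eq_norm x y).trans_le (norm_sub_le x y)
  nlinarith [dist_nonneg (x := x) (y := y), sq_nonneg (‖x‖ - ‖y‖)]

lemma IsCoupling.integral_dist_le {E : Type*} [NormedAddCommGroup E] [MeasurableSpace E]
    [BorelSpace E] [SecondCountableTopology E] {μ ν : Measure E} [IsFiniteMeasure μ]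
    {γ : Measure (E × E)} (hγ : IsCoupling γ μ ν)
    (hμ : Integrable (fun x => ‖x‖ ^ 2) μ) (hν : Integrable (fun x => ‖x‖ ^ 2) ν) :
    ∫ z, dist z.1 z.2 ∂γ
      ≤ √(2 * ((∫ x, ‖x‖ ^ 2 ∂μ) + ∫ x, ‖x‖ ^ 2 ∂ν)) * √(γ.real (diagonal E)ᶜ) := by
  have := hγ.isFiniteMeasure
  have h_bound : Integrable (fun z : E × E => 2 * (‖z.1‖ ^ 2 + ‖z.2‖ ^ 2)) γ :=
    ((hγ.integrable_comp_fst hμ).add (hγ.integrable_comp_snd hν)).const_mul 2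
  have h_sq : Integrable (fun z : E × E => dist z.1 z.2 ^ 2) γ := by
    refine h_bound.mono' (continuous_dist.pow 2).aestronglyMeasurable
      (Filter.Eventually.of_forall fun z => ?_)
    rw [Real.norm_of_nonneg (sq_nonneg _)]
    exact dist_sq_le_two_mul_norm_sq_add_norm_sq z.1 z.2
  have h_second_moment :
      ∫ z, dist z.1 z.2 ^ 2 ∂γ ≤ 2 * ((∫ x, ‖x‖ ^ 2 ∂μ) + ∫ x, ‖x‖ ^ 2 ∂ν) := by
    calc ∫ z, dist z.1 z.2 ^ 2 ∂γ ≤ ∫ z, 2 * (‖z.1‖ ^ 2 + ‖z.2‖ ^ 2) ∂γ :=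
          integral_mono h_sq h_bound fun z => dist_sq_le_two_mul_norm_sq_add_norm_sq z.1 z.2
      _ = 2 * ((∫ x, ‖x‖ ^ 2 ∂μ) + ∫ x, ‖x‖ ^ 2 ∂ν) := by
        rw [integral_const_mul, integral_add (hγ.integrable_comp_fst hμ)
          (hγ.integrable_comp_snd hν), hγ.integral_comp_fst hμ, hγ.integral_comp_snd hν]
  calc ∫ z, dist z.1 z.2 ∂γ ≤ √(∫ z, dist z.1 z.2 ^ 2 ∂γ) * √(γ.real (diagonal E)ᶜ) :=
        integral_le_sqrt_integral_sq_mul_sqrt_measureReal (fun z => dist_nonneg)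
          ((memLp_two_iff_integrable_sq continuous_dist.aestronglyMeasurable).2 h_sq)
          fun z hz => dist_eq_zero.2 (not_not.1 hz)
    _ ≤ _ := by gcongr

namespace MeasureTheory.Measure

variable {α : Type*} [MeasurableSpace α]

lemma exists_eq_add_eq_add_mutuallySingular (μ ν : Measure α) [IsFiniteMeasure μ]
    [IsFiniteMeasure ν] :
    ∃ η ρ₁ ρ₂ : Measure α, μ = η + ρ₁ ∧ ν = η + ρ₂ ∧ ρ₁ ⟂ₘ ρ₂ := by
  obtain ⟨s, hs, hμν, hνμ⟩ := exists_isHahnDecomposition μ ν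
  refine ⟨μ.restrict s + ν.restrict sᶜ, μ.restrict sᶜ - ν.restrict sᶜ,
    ν.restrict s - μ.restrict s, ?_, ?_, ⟨s, hs, ?_, ?_⟩⟩
  · conv_lhs => rw [← restrict_add_restrict_compl (μ := μ) hs, ← sub_add_cancel_of_le hνμ]
    ac_rfl
  · conv_lhs => rw [← restrict_add_restrict_compl (μ := ν) hs, ← sub_add_cancel_of_le hμν]
    ac_rfl
  · exact nonpos_iff_eq_zero.1 ((sub_le (μ := μ.restrict sᶜ)) s |>.trans_eq (by simp [hs]))
  · exact nonpos_iff_eq_zero.1 ((sub_le (μ := ν.restrict s)) sᶜ |>.trans_eq (by simp [hs]))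

lemma inv_measure_univ_mul_measure_univ_smul (ρ : Measure α) [IsFiniteMeasure ρ] :
    ((ρ univ)⁻¹ * ρ univ) • ρ = ρ := by
  rcases eq_or_ne ρ 0 with rfl | hρ
  · simp
  · rw [ENNReal.inv_mul_cancel (measure_univ_ne_zero.2 hρ) (measure_ne_top ρ univ), one_smul]

lemma measure_univ_eq_of_add_eq_add {μ ν η ρ₁ ρ₂ : Measure α} [IsProbabilityMeasure μ]
    [IsProbabilityMeasure ν] (hμ : μ = η + ρ₁) (hν : ν = η + ρ₂) : ρ₁ univ = ρ₂ univ := by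
  have h₁ : η univ + ρ₁ univ = 1 := by rw [← add_apply, ← hμ, measure_univ]
  have h₂ : η univ + ρ₂ univ = 1 := by rw [← add_apply, ← hν, measure_univ]
  have hη : η univ ≠ ⊤ := (ENNReal.add_ne_top.1 (h₁ ▸ ENNReal.one_ne_top)).1
  exact (ENNReal.add_right_inj hη).1 (h₁.trans h₂.symm)

end MeasureTheory.Measure

section TotalVariation

variable {α : Type*} [MeasurableSpace α] {μ ν : Measure α} [IsFiniteMeasure μ]
  [IsFiniteMeasure ν]

lemma abs_measureReal_sub_le_tvDist {s : Set α} (hs : MeasurableSet s) :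
    |μ.real s - ν.real s| ≤ tvDist μ ν := by
  refine le_ciSup
    (f := fun A : {s : Set α // MeasurableSet s} => |(μ ↑A).toReal - (ν ↑A).toReal|)
    ⟨μ.real univ + ν.real univ, ?_⟩ ⟨s, hs⟩
  rintro _ ⟨A, rfl⟩
  change |μ.real A - ν.real A| ≤ _
  have hμA : μ.real A ≤ μ.real univ := measureReal_mono (subset_univ _)
  have hνA : ν.real A ≤ ν.real univ := measureReal_mono (subset_univ _)
  exact abs_sub_le_iff.2 ⟨by linarith [measureReal_nonneg (μ := ν) (s := A)],
    by linarith [measureReal_nonneg (μ := μ) (s := A)]⟩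

lemma measureReal_univ_le_tvDist {η ρ₁ ρ₂ : Measure α} (hμ : μ = η + ρ₁) (hν : ν = η + ρ₂)
    (hρ : ρ₁ ⟂ₘ ρ₂) : ρ₁.real univ ≤ tvDist μ ν := by
  set u := hρ.nullSet
  have hρ₁ : ρ₁ uᶜ = ρ₁ univ := by
    rw [← measure_add_measure_compl (μ := ρ₁) hρ.measurableSet_nullSet, hρ.measure_nullSet,
      zero_add]
  have hμν : μ uᶜ = ν uᶜ + ρ₁ univ := by
    rw [hμ, hν, Measure.add_apply, Measure.add_apply, hρ.measure_compl_nullSet, add_zero, hρ₁]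
  have hρ₁_ne_top : ρ₁ univ ≠ ⊤ := (ENNReal.add_ne_top.1 (hμν ▸ measure_ne_top μ uᶜ)).2
  have hreal : μ.real uᶜ - ν.real uᶜ = ρ₁.real univ := by
    rw [measureReal_def, hμν, ENNReal.toReal_add (measure_ne_top ν uᶜ) hρ₁_ne_top]
    simp [measureReal_def]
  calc ρ₁.real univ = |μ.real uᶜ - ν.real uᶜ| := by rw [hreal, abs_of_nonneg measureReal_nonneg]
    _ ≤ tvDist μ ν := abs_measureReal_sub_le_tvDist hρ.measurableSet_nullSet.compl

end TotalVariation

section MaximalCoupling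

variable {α : Type*} [MeasurableSpace α]

-- For `ρ₁ = 0` the factor `(ρ₁ univ)⁻¹ = ⊤` multiplies the zero measure.
noncomputable def maximalCoupling (η ρ₁ ρ₂ : Measure α) : Measure (α × α) :=
  η.map Function.diag + (ρ₁ univ)⁻¹ • ρ₁.prod ρ₂

variable {η ρ₁ ρ₂ : Measure α} [IsFiniteMeasure ρ₁] [IsFiniteMeasure ρ₂]

lemma isCoupling_maximalCoupling (h : ρ₁ univ = ρ₂ univ) :
    IsCoupling (maximalCoupling η ρ₁ ρ₂) (η + ρ₁) (η + ρ₂) := by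
  constructor
  · rw [maximalCoupling, Measure.map_add _ _ measurable_fst, Measure.map_smul,
      Measure.map_map measurable_fst measurable_diag, Function.fst_comp_diag, Measure.map_id,
      Measure.map_fst_prod, ← h, smul_smul, Measure.inv_measure_univ_mul_measure_univ_smul]
  · rw [maximalCoupling, Measure.map_add _ _ measurable_snd, Measure.map_smul,
      Measure.map_map measurable_snd measurable_diag, Function.snd_comp_diag, Measure.map_id,
      Measure.map_snd_prod, h, smul_smul, Measure.inv_measure_univ_mul_measure_univ_smul]

lemma maximalCoupling_compl_diagonal_le [MeasurableEq α] (h : ρ₁ univ = ρ₂ univ) :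
    maximalCoupling η ρ₁ ρ₂ (diagonal α)ᶜ ≤ ρ₁ univ := by
  have hdiag : η.map Function.diag (diagonal α)ᶜ = 0 := by
    rw [Measure.map_apply measurable_diag measurableSet_diagonal.compl, ← range_diag,
      preimage_compl, preimage_range, compl_univ, measure_empty]
  have hprod : ρ₁.prod ρ₂ univ = ρ₁ univ * ρ₁ univ := by
    rw [← univ_prod_univ, Measure.prod_prod, h]
  rw [maximalCoupling, Measure.add_apply, hdiag, zero_add, Measure.smul_apply, smul_eq_mul]
  calc (ρ₁ univ)⁻¹ * ρ₁.prod ρ₂ (diagonal α)ᶜ ≤ (ρ₁ univ)⁻¹ * (ρ₁ univ * ρ₁ univ) := by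
        rw [← hprod]; gcongr; exact subset_univ _
    _ ≤ ρ₁ univ := by
      rcases eq_or_ne (ρ₁ univ) 0 with h0 | h0
      · simp [h0]
      · rw [ENNReal.inv_mul_cancel_left h0 (measure_ne_top ρ₁ univ)]

end MaximalCoupling

lemma exists_isCoupling_measureReal_compl_diagonal_le_tvDist {α : Type*} [MeasurableSpace α]
    [MeasurableEq α] (μ ν : Measure α) [IsProbabilityMeasure μ] [IsProbabilityMeasure ν] :
    ∃ γ : Measure (α × α), IsCoupling γ μ ν ∧ γ.real (diagonal α)ᶜ ≤ tvDist μ ν := by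
  obtain ⟨η, ρ₁, ρ₂, hμ, hν, hρ⟩ := Measure.exists_eq_add_eq_add_mutuallySingular μ ν
  have : IsFiniteMeasure ρ₁ := isFiniteMeasure_of_le μ (hμ ▸ Measure.le_add_left le_rfl)
  have : IsFiniteMeasure ρ₂ := isFiniteMeasure_of_le ν (hν ▸ Measure.le_add_left le_rfl)
  have hmass := Measure.measure_univ_eq_of_add_eq_add hμ hν
  refine ⟨maximalCoupling η ρ₁ ρ₂, hμ ▸ hν ▸ isCoupling_maximalCoupling hmass, ?_⟩
  calc (maximalCoupling η ρ₁ ρ₂).real (diagonal α)ᶜ ≤ ρ₁.real univ :=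
        ENNReal.toReal_mono (measure_ne_top ρ₁ univ) (maximalCoupling_compl_diagonal_le hmass)
    _ ≤ tvDist μ ν := measureReal_univ_le_tvDist hμ hν hρ

/-- for probability measures `μ`, `ν` on `ℝ^d` with finite second moments,
`W₁(μ, ν) ≤ √(2(∫‖x‖₂² dμ + ∫‖x‖₂² dν)) ⬝ √(D_TV(μ, ν))`. -/
theorem stmt11 {d : ℕ} (μ ν : Measure (EuclideanSpace ℝ (Fin d)))
    [IsProbabilityMeasure μ] [IsProbabilityMeasure ν]
    (hμ : Integrable (fun x => ‖x‖ ^ 2) μ) (hν : Integrable (fun x => ‖x‖ ^ 2) ν) :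
    W1 dist μ ν
      ≤ Real.sqrt (2 * ((∫ x, ‖x‖ ^ 2 ∂μ) + ∫ x, ‖x‖ ^ 2 ∂ν)) * Real.sqrt (tvDist μ ν) := by
  obtain ⟨γ, hγ, h_offdiag⟩ := exists_isCoupling_measureReal_compl_diagonal_le_tvDist μ ν
  calc W1 dist μ ν ≤ ∫ z, dist z.1 z.2 ∂γ :=
        W1_le_integral_of_isCoupling (fun _ _ => dist_nonneg) hγ
    _ ≤ √(2 * ((∫ x, ‖x‖ ^ 2 ∂μ) + ∫ x, ‖x‖ ^ 2 ∂ν)) * √(γ.real (diagonal _)ᶜ) :=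
        hγ.integral_dist_le hμ hν
    _ ≤ _ := by gcongr
end
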